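/- arXiv:1807.00609 — 3 statements merged into one kernel-verified Lean document; each statement's English description precedes it below -/
import Mathlib

section
/- The semigroup of convex polyhedra of the form (bounded lattice polytope) + C, where C is a fixed pointed rational polyhedral cone, under Minkowski addition, satisfies the cancellation law: if P + R = Q + R then P = Q. -/
open scoped Pointwise BigOperators

/-- `P` is of the form (bounded convex polytope) + `C`. -/
def IsPolyhedronOver {n : ℕ} (C P : Set (Fin n → ℝ)) : Prop :=
  ∃ B : Set (Fin n → ℝ), B.Finite ∧ B.Nonempty ∧ P = convexHull ℝ B + C

/-!
Rådström's cancellation argument: if `A + K ⊆ B + K` with `K` bounded and nonempty, then for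
`a ∈ A` one can write `a + kₘ = bₘ + kₘ₊₁` with `bₘ ∈ B`, `kₘ ∈ K`, starting from any `k₀ ∈ K`.
Telescoping shows that the average of `b₀, …, bₘ` differs from `a` by `(k₀ - kₘ₊₁) / (m + 1)`,
which tends to `0`; so `a` lies in `B` once `B` is closed and convex.

Since `C + C = C`, the equation `P + R = Q + R` becomes `P + conv B_R = Q + conv B_R`, and
`P = conv B_P + C`, `Q = conv B_Q + C` are closed (compact plus closed) and convex.
-/

open Filter Topology

lemma exists_mapsTo_add_sub_mem_of_add_subset_add {E : Type*} [AddCommGroup E] {A B K : Set E}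
    (h : A + K ⊆ B + K) {a : E} (ha : a ∈ A) :
    ∃ g : E → E, Set.MapsTo g K K ∧ ∀ x ∈ K, a + x - g x ∈ B := by
  have step : ∀ x : E, ∃ y : E, x ∈ K → y ∈ K ∧ a + x - y ∈ B := by
    intro x
    by_cases hx : x ∈ K
    · obtain ⟨b, hb, y, hy, hxy⟩ := h (Set.add_mem_add ha hx)
      exact ⟨y, fun _ ↦ ⟨hy, by rwa [← hxy, add_sub_cancel_right]⟩⟩
    · exact ⟨x, fun hx' ↦ absurd hx' hx⟩
  choose g hg using step
  exact ⟨g, fun x hx ↦ (hg x hx).1, fun x hx ↦ (hg x hx).2⟩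

lemma Finset.sum_range_add_sub_succ {E : Type*} [AddCommGroup E] (a : E) (k : ℕ → E) (m : ℕ) :
    ∑ i ∈ Finset.range m, (a + k i - k (i + 1)) = m • a + (k 0 - k m) := by
  simp only [add_sub_assoc, Finset.sum_add_distrib, Finset.sum_const, Finset.card_range,
    Finset.sum_range_sub']

section Radstrom

variable {E : Type*} [NormedAddCommGroup E] [NormedSpace ℝ E]

theorem Set.subset_of_add_subset_add {A B K : Set E} (hB : Convex ℝ B) (hBc : IsClosed B)
    (hK : K.Nonempty) (hKb : Bornology.IsBounded K) (h : A + K ⊆ B + K) : A ⊆ B := by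
  intro a ha
  obtain ⟨k₀, hk₀⟩ := hK
  obtain ⟨M, hM⟩ := hKb.exists_norm_le
  obtain ⟨g, hgK, hgB⟩ := exists_mapsTo_add_sub_mem_of_add_subset_add h ha
  set k : ℕ → E := fun m ↦ g^[m] k₀
  have hkK : ∀ m, k m ∈ K := fun m ↦ hgK.iterate m hk₀
  have hbB : ∀ m, a + k m - k (m + 1) ∈ B := fun m ↦ by
    simpa only [k, Function.iterate_succ_apply'] using hgB _ (hkK m)
  set avg : ℕ → E := fun m ↦
    (1 / ((m : ℝ) + 1)) • ∑ i ∈ Finset.range (m + 1), (a + k i - k (i + 1))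
  have havg_mem : ∀ m, avg m ∈ B := fun m ↦ by
    have := hB.centerMass_mem (t := Finset.range (m + 1)) (w := fun _ ↦ (1 : ℝ))
      (fun _ _ ↦ zero_le_one) (by simpa using m.cast_add_one_pos) (fun i _ ↦ hbB i)
    simpa [Finset.centerMass, avg] using this
  have havg_eq : ∀ m, avg m = a + (1 / ((m : ℝ) + 1)) • (k 0 - k (m + 1)) := fun m ↦ by
    have hm : (m : ℝ) + 1 ≠ 0 := by positivity
    simp only [avg, Finset.sum_range_add_sub_succ, smul_add, ← Nat.cast_smul_eq_nsmul ℝ,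
      smul_smul]
    push_cast
    rw [one_div_mul_cancel hm, one_smul]
  have hbdd : IsBoundedUnder (· ≤ ·) atTop (fun m ↦ ‖k 0 - k (m + 1)‖) :=
    isBoundedUnder_of ⟨M + M, fun m ↦
      (norm_sub_le _ _).trans (add_le_add (hM _ (hkK 0)) (hM _ (hkK (m + 1))))⟩
  have hlim : Tendsto avg atTop (𝓝 a) := by
    have := (tendsto_const_nhds (x := a)).add
      ((tendsto_one_div_add_atTop_nhds_zero_nat (𝕜 := ℝ)).zero_smul_isBoundedUnder_le hbdd)
    rwa [add_zero, ← funext havg_eq] at this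
  exact hBc.mem_of_tendsto hlim (Eventually.of_forall havg_mem)

theorem PointedCone.add_right_cancel_of_isCompact (C : PointedCone ℝ E)
    (hC : IsClosed (C : Set E)) {X Y Z : Set E} (hX : IsCompact X) (hXc : Convex ℝ X)
    (hY : IsCompact Y) (hYc : Convex ℝ Y) (hZne : Z.Nonempty) (hZ : Bornology.IsBounded Z)
    (h : X + C + (Z + C) = Y + C + (Z + C)) : X + C = Y + C := by
  have hCC : (C : Set E) + C = C := C.toAddSubmonoid.coe_add_self_eq
  have absorb : ∀ W : Set E, W + C + (Z + C) = W + C + Z := fun W ↦ by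
    rw [add_comm Z, ← add_assoc, add_assoc W, hCC]
  rw [absorb, absorb] at h
  exact (Set.subset_of_add_subset_add (hYc.add C.convex) (hC.add_left_of_isCompact hY)
    hZne hZ h.le).antisymm
    (Set.subset_of_add_subset_add (hXc.add C.convex) (hC.add_left_of_isCompact hX) hZne hZ h.ge)

end Radstrom

theorem exists_isClosed_pointedCone_eq_setOf_sum_mul_nonneg {n : ℕ} {ι : Type*} (V : Set ι)
    (w : ι → Fin n → ℝ) :
    ∃ K : PointedCone ℝ (Fin n → ℝ), IsClosed (K : Set (Fin n → ℝ)) ∧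
      (K : Set (Fin n → ℝ)) = {x | ∀ v ∈ V, 0 ≤ ∑ i, w v i * x i} :=
  ⟨PointedCone.dual (dotProductBilin ℝ ℝ) (w '' V),
    PointedCone.isClosed_dual fun _ ↦ LinearMap.continuous_of_finiteDimensional _,
    by ext; simp [dotProduct]⟩

theorem stmt8_general (n : ℕ) (C : Set (Fin n → ℝ))
    -- `C` is a pointed rational polyhedral cone:
    (hCpoly : ∃ V : Finset (Fin n → ℤ),
      C = {x | ∀ v ∈ V, 0 ≤ ∑ i, (v i : ℝ) * x i})
    (P Q R : Set (Fin n → ℝ))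
    (hP : IsPolyhedronOver C P) (hQ : IsPolyhedronOver C Q) (hR : IsPolyhedronOver C R)
    (h : P + R = Q + R) :
    P = Q := by
  obtain ⟨V, rfl⟩ := hCpoly
  obtain ⟨K, hKc, hK⟩ :=
    exists_isClosed_pointedCone_eq_setOf_sum_mul_nonneg (V : Set (Fin n → ℤ)) fun v i ↦ (v i : ℝ)
  simp only [Finset.mem_coe] at hK
  obtain ⟨BP, hBP, -, rfl⟩ := hP
  obtain ⟨BQ, hBQ, -, rfl⟩ := hQ
  obtain ⟨BR, hBR, hBRne, rfl⟩ := hR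
  rw [← hK] at h ⊢
  exact PointedCone.add_right_cancel_of_isCompact K hKc
    (hBP.isCompact_convexHull ℝ) (convex_convexHull ℝ _)
    (hBQ.isCompact_convexHull ℝ) (convex_convexHull ℝ _)
    (hBRne.mono (subset_convexHull ℝ _)) (hBR.isCompact_convexHull ℝ).isBounded h

theorem stmt8 (n : ℕ) (C : Set (Fin n → ℝ))
    -- `C` is a pointed rational polyhedral cone:
    (hCpoly : ∃ V : Finset (Fin n → ℤ),
      C = {x | ∀ v ∈ V, 0 ≤ ∑ i, (v i : ℝ) * x i})
    (hCpointed : ∀ x ∈ C, -x ∈ C → x = 0)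
    (P Q R : Set (Fin n → ℝ))
    (hP : IsPolyhedronOver C P) (hQ : IsPolyhedronOver C Q) (hR : IsPolyhedronOver C R)
    (h : P + R = Q + R) :
    P = Q :=
  stmt8_general n C hCpoly P Q R hP hQ hR h
end

section
/- A polyhedron P of the form (bounded polytope) + C, for a pointed rational polyhedral cone C in Q^n, is a translate of C if and only if P has no bounded edge. -/
/-!
If `P = v + C`, a bounded nonempty face of `P` can only be `{v}`: any other point `v + c` of the
face is interior to segments from `v` to `v + t • c` for every `t > 1`, which drags the whole ray
into the face.

Conversely, take a generic functional `w` strictly positive on `C \ {0}`, minimised over the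
vertex set at `v`. If `P ≠ v + C`, some vertex `y` has `y - v ∉ C`, and there is a second generic
functional `u`, again strictly positive on `C \ {0}`, with `u y < u v`. Increase `l ≥ 0` in
`w + l • u` until a second vertex `x` ties with `v`. The face of `P` minimising `w + l • u` is
bounded because the functional is strictly positive on `C \ {0}`, and the genericity of `u`
forces every tied vertex onto the line through `v` and `x`: this face is a bounded edge.
-/

open scoped Pointwise BigOperators

/-- `F` is a face of the convex set `P`. -/
def IsFaceOf {n : ℕ} (P F : Set (Fin n → ℝ)) : Prop :=
  F ⊆ P ∧ Convex ℝ F ∧ ∀ x ∈ P, ∀ y ∈ P, ∀ t : ℝ, 0 < t → t < 1 →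
    t • x + (1 - t) • y ∈ F → x ∈ F ∧ y ∈ F

open Matrix

section ConvexHull

variable {E : Type*} [AddCommGroup E] [Module ℝ E]

theorem le_apply_of_mem_convexHull {V : Set E} {f : E →ₗ[ℝ] ℝ} {m : ℝ}
    (hV : ∀ z ∈ V, m ≤ f z) {x : E} (hx : x ∈ convexHull ℝ V) : m ≤ f x :=
  convexHull_min hV (convex_halfSpace_ge f.isLinear m) hx

theorem mem_convexHull_setOf_eq_of_le {V : Set E} {f : E →ₗ[ℝ] ℝ} {m : ℝ}
    (hV : ∀ z ∈ V, m ≤ f z) {x : E} (hx : x ∈ convexHull ℝ V) (hxm : f x = m) :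
    x ∈ convexHull ℝ {z ∈ V | f z = m} := by
  set A := convexHull ℝ {z ∈ V | f z = m}
  have hA : ∀ a ∈ A, m ≤ f a := fun a ha =>
    le_apply_of_mem_convexHull (fun z hz => hV z hz.1) ha
  have above : ∀ p q : E, m < f p → m ≤ f q → ∀ a b : ℝ, 0 < a → 0 ≤ b → a + b = 1 →
      m < f (a • p + b • q) := by
    intro p q hp hq a b ha hb hab
    simp only [map_add, map_smul, smul_eq_mul]
    have hm : m = a * m + b * m := by rw [← add_mul, hab, one_mul]
    linarith [mul_lt_mul_of_pos_left hp ha, mul_le_mul_of_nonneg_left hq hb]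
  -- a segment leaving `A` immediately rises above the level `m`
  have hT : Convex ℝ ({y | m < f y} ∪ A) := by
    rintro p (hp | hp) q (hq | hq) a b ha hb hab
    · exact .inl (convex_halfSpace_gt f.isLinear m hp hq ha hb hab)
    · rcases ha.eq_or_lt with rfl | ha
      · rw [zero_add] at hab; simpa [hab] using Or.inr hq
      · exact .inl (above p q hp (hA q hq) a b ha hb hab)
    · rcases hb.eq_or_lt with rfl | hb
      · rw [add_zero] at hab; simpa [hab] using Or.inr hp
      · rw [add_comm]
        exact .inl (above q p hq (hA p hp) b a hb ha (by rw [add_comm, hab]))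
    · exact .inr (convex_convexHull ℝ _ hp hq ha hb hab)
  have hVT : V ⊆ {y | m < f y} ∪ A := fun z hz =>
    (hV z hz).lt_or_eq.imp id fun h => subset_convexHull ℝ _ ⟨hz, h.symm⟩
  exact (convexHull_min hVT hT hx).resolve_left hxm.not_gt

end ConvexHull

theorem exists_first_tie {α : Type*} {s : Set α} (hs : s.Finite) (f g : α → ℝ) {a b : ℝ}
    (hf : ∀ z ∈ s, a ≤ f z) (hg : ∃ y ∈ s, g y < b) :
    ∃ l : ℝ, 0 ≤ l ∧ ∃ x ∈ s, g x < b ∧ f x + l * g x = a + l * b ∧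
      ∀ z ∈ s, a + l * b ≤ f z + l * g z := by
  obtain ⟨x, ⟨hxs, hxb⟩, hxmin⟩ := Set.exists_min_image {z ∈ s | g z < b}
    (fun z => (f z - a) / (b - g z)) (hs.subset (Set.sep_subset _ _)) hg
  have hbx : 0 < b - g x := sub_pos.2 hxb
  have hl : 0 ≤ (f x - a) / (b - g x) := div_nonneg (sub_nonneg.2 (hf x hxs)) hbx.le
  refine ⟨_, hl, x, hxs, hxb, ?_, fun z hz => ?_⟩
  · field_simp
    ring
  · rcases lt_or_ge (g z) b with hzb | hzb
    · have := hxmin z ⟨hz, hzb⟩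
      rw [le_div_iff₀ (sub_pos.2 hzb)] at this
      linarith
    · linarith [hf z hz, mul_le_mul_of_nonneg_left hzb hl]

variable {n : ℕ}

theorem isFaceOf_setOf_forall_dotProduct_le {P : Set (Fin n → ℝ)} (hP : Convex ℝ P)
    (w : Fin n → ℝ) : IsFaceOf P {x ∈ P | ∀ y ∈ P, w ⬝ᵥ x ≤ w ⬝ᵥ y} := by
  refine ⟨fun x hx => hx.1, ?_, ?_⟩
  · rintro x ⟨hxP, hx⟩ x' ⟨hx'P, hx'⟩ a b ha hb hab
    refine ⟨hP hxP hx'P ha hb hab, fun y hy => ?_⟩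
    simp only [dotProduct_add, dotProduct_smul, smul_eq_mul]
    have hwy : w ⬝ᵥ y = a * w ⬝ᵥ y + b * w ⬝ᵥ y := by rw [← add_mul, hab, one_mul]
    linarith [mul_le_mul_of_nonneg_left (hx y hy) ha, mul_le_mul_of_nonneg_left (hx' y hy) hb]
  · intro x hx y hy t ht0 ht1 ⟨_, hmin⟩
    have hxy := hmin x hx
    have hyx := hmin y hy
    simp only [dotProduct_add, dotProduct_smul, smul_eq_mul] at hxy hyx hmin
    have hx_eq_y : w ⬝ᵥ x = w ⬝ᵥ y := by nlinarith
    refine ⟨⟨hx, fun z hz => ?_⟩, ⟨hy, fun z hz => ?_⟩⟩ <;> nlinarith [hmin z hz]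

def strictDual (C : Set (Fin n → ℝ)) : Set (Fin n → ℝ) :=
  {w | ∀ c ∈ C, c ≠ 0 → 0 < w ⬝ᵥ c}

theorem isOpen_strictDual {C : Set (Fin n → ℝ)} (hC : IsClosed C)
    (hsmul : ∀ c ∈ C, ∀ t : ℝ, 0 < t → t • c ∈ C) : IsOpen (strictDual C) := by
  set K := C ∩ Metric.sphere 0 1
  have hK : IsCompact K := (isCompact_sphere 0 1).inter_left hC
  -- by homogeneity it suffices to test on the compact set of unit vectors of `C`
  have hdual : strictDual C = {w | ∀ c ∈ K, 0 < w ⬝ᵥ c} := by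
    ext w
    refine ⟨fun hw c hc => hw c hc.1 (ne_zero_of_mem_unit_sphere ⟨c, hc.2⟩), fun hw c hc hc0 => ?_⟩
    have hpos : 0 < ‖c‖⁻¹ := inv_pos.2 (norm_pos_iff.2 hc0)
    have := hw (‖c‖⁻¹ • c) ⟨hsmul c hc _ hpos, by simp [norm_smul, hc0]⟩
    rw [dotProduct_smul, smul_eq_mul] at this
    exact pos_of_mul_pos_right this hpos.le
  rw [hdual, isOpen_iff_eventually]
  intro w hw
  exact hK.eventually_forall_of_forall_eventually fun c hc =>
    (continuous_fst.dotProduct continuous_snd).continuousAt.eventually (lt_mem_nhds (hw c hc))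

theorem dotProduct_nonneg_of_mem_strictDual {C : Set (Fin n → ℝ)} {w : Fin n → ℝ}
    (hw : w ∈ strictDual C) {c : Fin n → ℝ} (hc : c ∈ C) : 0 ≤ w ⬝ᵥ c := by
  rcases eq_or_ne c 0 with rfl | hc0
  · rw [dotProduct_zero]
  · exact (hw c hc hc0).le

theorem add_smul_mem_strictDual {C : Set (Fin n → ℝ)} {w u : Fin n → ℝ} (hw : w ∈ strictDual C)
    (hu : ∀ c ∈ C, 0 ≤ u ⬝ᵥ c) {t : ℝ} (ht : 0 ≤ t) : w + t • u ∈ strictDual C := by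
  intro c hc hc0
  rw [add_dotProduct, smul_dotProduct, smul_eq_mul]
  exact add_pos_of_pos_of_nonneg (hw c hc hc0) (mul_nonneg ht (hu c hc))

theorem dense_setOf_forall_dotProduct_ne_zero {S : Set (Fin n → ℝ)} (hS : S.Finite) :
    Dense {w : Fin n → ℝ | ∀ d ∈ S, d ≠ 0 → w ⬝ᵥ d ≠ 0} := by
  have hinter : {w : Fin n → ℝ | ∀ d ∈ S, d ≠ 0 → w ⬝ᵥ d ≠ 0} =
      ⋂ d ∈ S, {w | d ≠ 0 → w ⬝ᵥ d ≠ 0} := by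
    ext; simp
  rw [hinter]
  refine dense_biInter_of_isOpen (fun d _ => ?_) hS.countable fun d _ => ?_
  · by_cases hd : d = 0
    · simp [hd]
    · simpa [hd] using isOpen_ne_fun (continuous_id.dotProduct continuous_const) continuous_const
  · by_cases hd : d = 0
    · simp [hd]
    have hker : interior ((LinearMap.ker (dotProductBilin ℝ ℝ d) : Set (Fin n → ℝ))) = ∅ := by
      by_contra hne
      have htop := (LinearMap.ker (dotProductBilin ℝ ℝ d)).eq_top_of_nonempty_interior'
        (Set.nonempty_iff_ne_empty.2 hne)
      have : d ⬝ᵥ d = 0 := by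
        simpa using (LinearMap.ker (dotProductBilin ℝ ℝ d)).eq_top_iff'.1 htop d
      exact hd (dotProduct_self_eq_zero.1 this)
    rw [interior_eq_empty_iff_dense_compl] at hker
    convert hker using 1
    ext w
    simp [hd, dotProduct_comm]

theorem exists_eq_smul_of_dotProduct_add_smul_eq_zero {w u d e : Fin n → ℝ} {l : ℝ}
    (hd : w ⬝ᵥ d ≠ 0)
    (hu : (w ⬝ᵥ e) • d - (w ⬝ᵥ d) • e ≠ 0 → u ⬝ᵥ ((w ⬝ᵥ e) • d - (w ⬝ᵥ d) • e) ≠ 0)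
    (hd0 : (w + l • u) ⬝ᵥ d = 0) (he0 : (w + l • u) ⬝ᵥ e = 0) : ∃ r : ℝ, e = r • d := by
  simp only [add_dotProduct, smul_dotProduct, smul_eq_mul] at hd0 he0
  have hwedge : (w ⬝ᵥ e) • d - (w ⬝ᵥ d) • e = 0 := by
    by_contra h
    apply hu h
    simp only [dotProduct_sub, dotProduct_smul, smul_eq_mul]
    linear_combination (u ⬝ᵥ d) * he0 - (u ⬝ᵥ e) * hd0
  refine ⟨(w ⬝ᵥ e) / (w ⬝ᵥ d), ?_⟩
  rw [sub_eq_zero] at hwedge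
  rw [div_eq_inv_mul, mul_smul, hwedge, smul_smul, inv_mul_cancel₀ hd, one_smul]

theorem le_dotProduct_of_mem_convexHull_add {C V : Set (Fin n → ℝ)} {w : Fin n → ℝ}
    (hw : ∀ c ∈ C, 0 ≤ w ⬝ᵥ c) {m : ℝ} (hV : ∀ z ∈ V, m ≤ w ⬝ᵥ z) {p : Fin n → ℝ}
    (hp : p ∈ convexHull ℝ V + C) : m ≤ w ⬝ᵥ p := by
  obtain ⟨b, hb, c, hc, rfl⟩ := Set.mem_add.1 hp
  have hbm : m ≤ w ⬝ᵥ b := le_apply_of_mem_convexHull (f := dotProductBilin ℝ ℝ w) hV hb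
  rw [dotProduct_add]
  linarith [hw c hc]

theorem mem_convexHull_of_mem_convexHull_add_of_dotProduct_eq {C V : Set (Fin n → ℝ)}
    {w : Fin n → ℝ} (hw : w ∈ strictDual C) {m : ℝ} (hV : ∀ z ∈ V, m ≤ w ⬝ᵥ z)
    {p : Fin n → ℝ} (hp : p ∈ convexHull ℝ V + C) (hpm : w ⬝ᵥ p = m) :
    p ∈ convexHull ℝ {z ∈ V | w ⬝ᵥ z = m} := by
  obtain ⟨b, hb, c, hc, rfl⟩ := Set.mem_add.1 hp
  have hbm : m ≤ w ⬝ᵥ b := le_apply_of_mem_convexHull (f := dotProductBilin ℝ ℝ w) hV hb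
  have hc0 : c = 0 := by
    by_contra hc0
    have := hw c hc hc0
    rw [dotProduct_add] at hpm
    linarith
  rw [hc0, add_zero] at hpm ⊢
  exact mem_convexHull_setOf_eq_of_le (f := dotProductBilin ℝ ℝ w) hV hb hpm

theorem exists_bounded_edge_of_collinear_minimizers {C V : Set (Fin n → ℝ)} (hC : Convex ℝ C)
    (hC0 : (0 : Fin n → ℝ) ∈ C) (hV : V.Finite) {w : Fin n → ℝ} (hw : w ∈ strictDual C)
    {v x : Fin n → ℝ} (hv : v ∈ V) (hx : x ∈ V) (hvx : v ≠ x)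
    (hmin : ∀ z ∈ V, w ⬝ᵥ v ≤ w ⬝ᵥ z) (htie : w ⬝ᵥ x = w ⬝ᵥ v)
    (hline : ∀ z ∈ V, w ⬝ᵥ z = w ⬝ᵥ v → z ∈ line[ℝ, v, x]) :
    ∃ F : Set (Fin n → ℝ), F.Nonempty ∧ IsFaceOf (convexHull ℝ V + C) F ∧
      Module.finrank ℝ (vectorSpan ℝ F) = 1 ∧ Bornology.IsBounded F := by
  set P := convexHull ℝ V + C
  set F := {q ∈ P | ∀ y ∈ P, w ⬝ᵥ q ≤ w ⬝ᵥ y}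
  have hVP : V ⊆ P := fun z hz =>
    Set.mem_add.2 ⟨z, subset_convexHull ℝ V hz, 0, hC0, add_zero z⟩
  have hlow : ∀ q ∈ P, w ⬝ᵥ v ≤ w ⬝ᵥ q := fun q hq =>
    le_dotProduct_of_mem_convexHull_add (fun c hc => dotProduct_nonneg_of_mem_strictDual hw hc)
      hmin hq
  have hvF : v ∈ F := ⟨hVP hv, hlow⟩
  have hxF : x ∈ F := ⟨hVP hx, htie ▸ hlow⟩
  have hFhull : F ⊆ convexHull ℝ {z ∈ V | w ⬝ᵥ z = w ⬝ᵥ v} := fun q hq =>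
    mem_convexHull_of_mem_convexHull_add_of_dotProduct_eq hw hmin hq.1
      (le_antisymm (hq.2 v (hVP hv)) (hlow q hq.1))
  have hspan : affineSpan ℝ F = line[ℝ, v, x] := by
    refine le_antisymm (affineSpan_le.2 (hFhull.trans ?_))
      (affineSpan_mono ℝ (Set.pair_subset hvF hxF))
    exact convexHull_min (fun z hz => hline z hz.1 hz.2) (AffineSubspace.convex _)
  refine ⟨F, ⟨v, hvF⟩, isFaceOf_setOf_forall_dotProduct_le ((convex_convexHull ℝ V).add hC) w,
    ?_, ?_⟩
  · rw [← direction_affineSpan, hspan, direction_affineSpan, vectorSpan_pair,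
      finrank_span_singleton (vsub_ne_zero.2 hvx)]
  · exact (isBounded_convexHull.2 hV.isBounded).subset
      (hFhull.trans (convexHull_mono (Set.sep_subset _ _)))

theorem subset_singleton_of_isFaceOf_singleton_add {C : Set (Fin n → ℝ)}
    (hC : ∀ c ∈ C, ∀ t : ℝ, 0 ≤ t → t • c ∈ C) {v : Fin n → ℝ} {F : Set (Fin n → ℝ)}
    (hF : IsFaceOf ({v} + C) F) (hFb : Bornology.IsBounded F) : F ⊆ {v} := by
  intro p hp
  obtain ⟨c, hc, rfl⟩ : ∃ c ∈ C, v + c = p := by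
    simpa only [Set.singleton_add, Set.mem_image] using hF.1 hp
  have hmem : ∀ t : ℝ, 0 ≤ t → v + t • c ∈ ({v} + C) := fun t ht =>
    Set.add_mem_add rfl (hC c hc t ht)
  have hray : ∀ t : ℝ, 1 < t → v + t • c ∈ F := by
    intro t ht
    have hcomb : t⁻¹ • (v + t • c) + (1 - t⁻¹) • (v + (0 : ℝ) • c) = v + c := by
      rw [zero_smul, add_zero, smul_add, smul_smul, inv_mul_cancel₀ (by positivity), one_smul]
      module
    exact (hF.2.2 _ (hmem t (by positivity)) _ (hmem 0 le_rfl) t⁻¹ (by positivity)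
      (inv_lt_one_of_one_lt₀ ht) (hcomb ▸ hp)).1
  rw [Set.mem_singleton_iff, add_eq_left]
  by_contra hc0
  obtain ⟨R, hR⟩ := isBounded_iff_forall_norm_le.1 hFb
  have hcpos : 0 < ‖c‖ := norm_pos_iff.2 hc0
  have hR0 : 0 ≤ R + ‖v‖ := add_nonneg ((norm_nonneg _).trans (hR _ hp)) (norm_nonneg _)
  set t := (R + ‖v‖) / ‖c‖ + 2
  have ht : 1 < t := by linarith [div_nonneg hR0 hcpos.le]
  have htc : t * ‖c‖ = R + ‖v‖ + 2 * ‖c‖ := by rw [add_mul, div_mul_cancel₀ _ hcpos.ne']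
  have hnorm : t * ‖c‖ ≤ R + ‖v‖ := by
    have := norm_sub_le (v + t • c) v
    rw [add_sub_cancel_left, norm_smul, Real.norm_of_nonneg (by linarith)] at this
    linarith [hR _ (hray t ht)]
  linarith

theorem convexHull_add_eq_singleton_add {C V : Set (Fin n → ℝ)} (hC : Convex ℝ C)
    (hCadd : C + C ⊆ C) {v : Fin n → ℝ} (hv : v ∈ V) (hV : ∀ z ∈ V, z - v ∈ C) :
    convexHull ℝ V + C = {v} + C := by
  have hVv : V ⊆ {v} + C := fun z hz => Set.mem_add.2 ⟨v, rfl, z - v, hV z hz, add_sub_cancel v z⟩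
  refine (Set.add_subset_add_right
    (Set.singleton_subset_iff.2 (subset_convexHull ℝ V hv))).antisymm' ?_
  calc convexHull ℝ V + C ⊆ {v} + C + C :=
        Set.add_subset_add_right (convexHull_min hVv ((convex_singleton v).add hC))
    _ = {v} + (C + C) := add_assoc _ _ _
    _ ⊆ {v} + C := Set.add_subset_add_left hCadd

def polyCone (U : Finset (Fin n → ℝ)) : Set (Fin n → ℝ) :=
  {x | ∀ u ∈ U, 0 ≤ u ⬝ᵥ x}

section polyCone

variable {U : Finset (Fin n → ℝ)}

theorem isClosed_polyCone (U : Finset (Fin n → ℝ)) : IsClosed (polyCone U) := by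
  simp only [polyCone, Set.ofPred_forall]
  exact isClosed_biInter fun u _ =>
    isClosed_le continuous_const (continuous_const.dotProduct continuous_id)

theorem zero_mem_polyCone : (0 : Fin n → ℝ) ∈ polyCone U := fun u _ => (dotProduct_zero u).ge

theorem smul_mem_polyCone {x : Fin n → ℝ} (hx : x ∈ polyCone U) {t : ℝ} (ht : 0 ≤ t) :
    t • x ∈ polyCone U := fun u hu => by
  rw [dotProduct_smul, smul_eq_mul]
  exact mul_nonneg ht (hx u hu)

theorem add_polyCone_subset : polyCone U + polyCone U ⊆ polyCone U := by
  rintro _ ⟨x, hx, y, hy, rfl⟩ u hu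
  rw [dotProduct_add]
  exact add_nonneg (hx u hu) (hy u hu)

theorem convex_polyCone : Convex ℝ (polyCone U) := fun _ hx _ hy _ _ ha hb _ =>
  add_polyCone_subset ⟨_, smul_mem_polyCone hx ha, _, smul_mem_polyCone hy hb, rfl⟩

theorem sum_mem_strictDual_polyCone (hU : ∀ x ∈ polyCone U, -x ∈ polyCone U → x = 0) :
    ∑ u ∈ U, u ∈ strictDual (polyCone U) := by
  intro c hc hc0
  rw [sum_dotProduct]
  refine (Finset.sum_nonneg hc).lt_of_ne fun hzero => hc0 (hU c hc fun u hu => ?_)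
  rw [dotProduct_neg, (Finset.sum_eq_zero_iff_of_nonneg hc).1 hzero.symm u hu, neg_zero]

theorem exists_mem_strictDual_dotProduct_neg {w : Fin n → ℝ} (hw : w ∈ strictDual (polyCone U))
    {d : Fin n → ℝ} (hd : d ∉ polyCone U) :
    ∃ w' ∈ strictDual (polyCone U), w' ⬝ᵥ d < 0 := by
  obtain ⟨u, hu, hud⟩ : ∃ u ∈ U, u ⬝ᵥ d < 0 := by simpa [polyCone] using hd
  have ht : 0 ≤ (|w ⬝ᵥ d| + 1) / -(u ⬝ᵥ d) := by
    have := neg_pos.2 hud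
    positivity
  refine ⟨_, add_smul_mem_strictDual hw (fun c hc => hc u hu) ht, ?_⟩
  have hcancel : (|w ⬝ᵥ d| + 1) / -(u ⬝ᵥ d) * (u ⬝ᵥ d) = -(|w ⬝ᵥ d| + 1) := by
    field_simp [hud.ne]
  rw [add_dotProduct, smul_dotProduct, smul_eq_mul, hcancel]
  linarith [le_abs_self (w ⬝ᵥ d)]

end polyCone

theorem exists_bounded_edge_of_forall_ne_singleton_add {U : Finset (Fin n → ℝ)}
    (hU : (strictDual (polyCone U)).Nonempty) {V : Set (Fin n → ℝ)} (hVfin : V.Finite)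
    (hV : V.Nonempty) (hP : ∀ v, convexHull ℝ V + polyCone U ≠ {v} + polyCone U) :
    ∃ F : Set (Fin n → ℝ), F.Nonempty ∧ IsFaceOf (convexHull ℝ V + polyCone U) F ∧
      Module.finrank ℝ (vectorSpan ℝ F) = 1 ∧ Bornology.IsBounded F := by
  have hopen := isOpen_strictDual (isClosed_polyCone U) fun c hc t ht => smul_mem_polyCone hc ht.le
  obtain ⟨w, hwgen, hw⟩ :=
    (dense_setOf_forall_dotProduct_ne_zero (hVfin.sub hVfin)).exists_mem_open hopen hU
  obtain ⟨v, hv, hvmin⟩ := V.exists_min_image (w ⬝ᵥ ·) hVfin hV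
  obtain ⟨y, hy, hyv⟩ : ∃ y ∈ V, y - v ∉ polyCone U := by
    by_contra! h
    exact hP v (convexHull_add_eq_singleton_add convex_polyCone add_polyCone_subset hv h)
  obtain ⟨w', hw', hw'y⟩ := exists_mem_strictDual_dotProduct_neg hw hyv
  -- this choice of `u` makes `(w ⬝ᵥ ·, u ⬝ᵥ ·)` injective on the plane spanned by any two
  -- independent directions `x - v`, `z - v`
  obtain ⟨u, hugen, hu, huy⟩ := (dense_setOf_forall_dotProduct_ne_zero (hVfin.image2
      (fun x z => (w ⬝ᵥ (z - v)) • (x - v) - (w ⬝ᵥ (x - v)) • (z - v)) hVfin)).exists_mem_open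
    (hopen.inter (isOpen_lt (f := (· ⬝ᵥ (y - v))) (continuous_id.dotProduct continuous_const)
      continuous_const))
    ⟨w', hw', hw'y⟩
  obtain ⟨l, hl, x, hx, hxv, htie, hmin⟩ := exists_first_tie hVfin (w ⬝ᵥ ·) (u ⬝ᵥ ·) hvmin
    ⟨y, hy, by rwa [Set.mem_ofPred_eq, dotProduct_sub, sub_neg] at huy⟩
  have hdot : ∀ z, (w + l • u) ⬝ᵥ z = w ⬝ᵥ z + l * u ⬝ᵥ z := fun z => by
    rw [add_dotProduct, smul_dotProduct, smul_eq_mul]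
  have hvx : v ≠ x := by
    rintro rfl
    exact hxv.false
  refine exists_bounded_edge_of_collinear_minimizers convex_polyCone zero_mem_polyCone hVfin
    (add_smul_mem_strictDual hw (fun c hc => dotProduct_nonneg_of_mem_strictDual hu hc) hl)
    hv hx hvx (by simpa only [hdot] using hmin) (by rw [hdot, hdot, htie]) fun z hz hzv => ?_
  obtain ⟨r, hr⟩ := exists_eq_smul_of_dotProduct_add_smul_eq_zero (l := l)
    (hwgen _ (Set.sub_mem_sub hx hv) (sub_ne_zero.2 hvx.symm))
    (hugen _ (Set.mem_image2_of_mem hx hz))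
    (by rw [dotProduct_sub, hdot, hdot, htie, sub_self]) (by rw [dotProduct_sub, hzv, sub_self])
  rw [← sub_add_cancel z v, hr]
  exact smul_vsub_vadd_mem_affineSpan_pair r v x

theorem stmt11 (n : ℕ) (C P B : Set (Fin n → ℝ))
    -- `C` is a pointed rational polyhedral cone:
    (hCpoly : ∃ V : Finset (Fin n → ℤ),
      C = {x | ∀ v ∈ V, 0 ≤ ∑ i, (v i : ℝ) * x i})
    (hCpointed : ∀ x ∈ C, -x ∈ C → x = 0)
    -- `P = B + C` for a bounded convex polytope `B`:
    (hB : ∃ V : Set (Fin n → ℝ), V.Finite ∧ V.Nonempty ∧ B = convexHull ℝ V)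
    (hP : P = B + C) :
    (∃ v : Fin n → ℝ, P = {v} + C) ↔
      ¬∃ F : Set (Fin n → ℝ), F.Nonempty ∧ IsFaceOf P F ∧
        Module.finrank ℝ (vectorSpan ℝ F) = 1 ∧ Bornology.IsBounded F := by
  obtain ⟨Vc, rfl⟩ := hCpoly
  obtain ⟨V, hVfin, hV, rfl⟩ := hB
  subst hP
  have hC : {x : Fin n → ℝ | ∀ v ∈ Vc, 0 ≤ ∑ i, (v i : ℝ) * x i} =
      polyCone (Vc.image fun v i => (v i : ℝ)) := by
    ext x
    simp [polyCone, dotProduct]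
  rw [hC] at hCpointed ⊢
  constructor
  · rintro ⟨v, hv⟩ ⟨F, hFne, hF, hrank, hFb⟩
    rw [hv] at hF
    have hFv : F = {v} := hFne.subset_singleton_iff.1
      (subset_singleton_of_isFaceOf_singleton_add (fun c hc t ht => smul_mem_polyCone hc ht) hF hFb)
    rw [hFv, vectorSpan_singleton, finrank_bot] at hrank
    exact zero_ne_one hrank
  · intro hno
    by_contra! hne
    exact hno (exists_bounded_edge_of_forall_ne_singleton_add
      ⟨_, sum_mem_strictDual_polyCone hCpointed⟩ hVfin hV hne)
end

section
/- If π: Q^2 → Q^1 is the projection to the last coordinate restricted to a bounded lattice polygon N with image the segment [a,b], then the fiber polytope ∫_{[a,b]} N is a segment whose lattice length equals the lattice area of N. -/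
open scoped BigOperators
open MeasureTheory
open Filter Topology

lemma aux_convex_cont {f : ℝ → ℝ} {a b : ℝ} (hab : a ≤ b)
    (hcvx : ConvexOn ℝ (Set.Icc a b) f)
    (hlsc : ∀ x ∈ Set.Icc a b, ∀ ε > 0, ∀ᶠ y in 𝓝[Set.Icc a b] x, f x - ε < f y) :
    ContinuousOn f (Set.Icc a b) := by
  rcases eq_or_lt_of_le hab with rfl | hab'
  · rw [Set.Icc_self]
    exact continuousOn_singleton f a
  intro x₀ hx₀
  have key : ∀ ε > 0, ∃ δ > 0, ∀ y ∈ Set.Icc a b, |y - x₀| < δ → f y < f x₀ + ε := by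
    intro ε hε
    obtain ⟨δ₁, hδ₁pos, hδ₁⟩ : ∃ δ₁ > 0, ∀ y ∈ Set.Icc a b, x₀ ≤ y → y - x₀ < δ₁ →
        f y < f x₀ + ε := by
      by_cases hxb : x₀ < b
      · have hb0 : (0:ℝ) < b - x₀ := by linarith
        refine ⟨(b - x₀) * ε / (|f b - f x₀| + 1),
          div_pos (mul_pos hb0 hε) (by positivity), ?_⟩
        intro y hy hxy hlt
        rcases eq_or_lt_of_le hxy with rfl | hxy'
        · linarith
        set A := |f b - f x₀| with hA
        have hA0 : 0 ≤ A := abs_nonneg _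
        set t := (y - x₀) / (b - x₀) with ht
        have ht0 : 0 ≤ t := div_nonneg (by linarith) hb0.le
        have ht1 : t ≤ 1 := by
          rw [div_le_one hb0]; linarith [hy.2]
        have hyeq : (1 - t) • x₀ + t • b = y := by
          simp only [smul_eq_mul, ht]; field_simp; ring
        have hcomb := hcvx.2 hx₀ ⟨hab, le_refl b⟩ (by linarith : (0:ℝ) ≤ 1 - t) ht0 (by ring)
        rw [hyeq] at hcomb
        simp only [smul_eq_mul] at hcomb
        have h1 : f y ≤ f x₀ + t * (f b - f x₀) := by nlinarith [hcomb]
        have h2 : t * (f b - f x₀) ≤ t * A := by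
          apply mul_le_mul_of_nonneg_left (le_abs_self _) ht0
        have h3 : t * A < ε := by
          rw [ht, div_mul_eq_mul_div, div_lt_iff₀ hb0]
          have h5 : (y - x₀) * (A + 1) < ((b - x₀) * ε / (A + 1)) * (A + 1) :=
            mul_lt_mul_of_pos_right hlt (by positivity)
          have h6 : ((b - x₀) * ε / (A + 1)) * (A + 1) = (b - x₀) * ε := by field_simp
          nlinarith [hxy']
        linarith
      · refine ⟨1, one_pos, fun y hy hxy _ => ?_⟩
        have hxb' : x₀ = b := le_antisymm hx₀.2 (not_lt.mp hxb)
        have : y = x₀ := le_antisymm (hxb' ▸ hy.2) hxy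
        rw [this]; linarith
    obtain ⟨δ₂, hδ₂pos, hδ₂⟩ : ∃ δ₂ > 0, ∀ y ∈ Set.Icc a b, y ≤ x₀ → x₀ - y < δ₂ →
        f y < f x₀ + ε := by
      by_cases hxa : a < x₀
      · have ha0 : (0:ℝ) < x₀ - a := by linarith
        refine ⟨(x₀ - a) * ε / (|f a - f x₀| + 1),
          div_pos (mul_pos ha0 hε) (by positivity), ?_⟩
        intro y hy hxy hlt
        rcases eq_or_lt_of_le hxy with rfl | hxy'
        · linarith
        set A := |f a - f x₀| with hA
        have hA0 : 0 ≤ A := abs_nonneg _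
        set t := (x₀ - y) / (x₀ - a) with ht
        have ht0 : 0 ≤ t := div_nonneg (by linarith) ha0.le
        have ht1 : t ≤ 1 := by
          rw [div_le_one ha0]; linarith [hy.1]
        have hyeq : t • a + (1 - t) • x₀ = y := by
          simp only [smul_eq_mul, ht]; field_simp; ring
        have hcomb := hcvx.2 ⟨le_refl a, hab⟩ hx₀ ht0 (by linarith : (0:ℝ) ≤ 1 - t) (by ring)
        rw [hyeq] at hcomb
        simp only [smul_eq_mul] at hcomb
        have h1 : f y ≤ f x₀ + t * (f a - f x₀) := by nlinarith [hcomb]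
        have h2 : t * (f a - f x₀) ≤ t * A := by
          apply mul_le_mul_of_nonneg_left (le_abs_self _) ht0
        have h3 : t * A < ε := by
          rw [ht, div_mul_eq_mul_div, div_lt_iff₀ ha0]
          have h5 : (x₀ - y) * (A + 1) < ((x₀ - a) * ε / (A + 1)) * (A + 1) :=
            mul_lt_mul_of_pos_right hlt (by positivity)
          have h6 : ((x₀ - a) * ε / (A + 1)) * (A + 1) = (x₀ - a) * ε := by field_simp
          nlinarith [hxy']
        linarith
      · refine ⟨1, one_pos, fun y hy hxy _ => ?_⟩
        have hxa' : x₀ = a := le_antisymm (not_lt.mp hxa) hx₀.1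
        have : y = x₀ := le_antisymm hxy (hxa' ▸ hy.1)
        rw [this]; linarith
    refine ⟨min δ₁ δ₂, lt_min hδ₁pos hδ₂pos, fun y hy hdy => ?_⟩
    rcases le_total x₀ y with h | h
    · exact hδ₁ y hy h
        (lt_of_le_of_lt (le_abs_self _) (lt_of_lt_of_le hdy (min_le_left _ _)))
    · refine hδ₂ y hy h ?_
      have : x₀ - y ≤ |y - x₀| := by rw [abs_sub_comm]; exact le_abs_self _
      exact lt_of_le_of_lt this (lt_of_lt_of_le hdy (min_le_right _ _))
  rw [ContinuousWithinAt, Metric.tendsto_nhds]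
  intro ε hε
  obtain ⟨δ, hδ, hδ'⟩ := key ε hε
  filter_upwards [hlsc x₀ hx₀ ε hε, eventually_mem_nhdsWithin,
    (eventually_abs_sub_lt x₀ hδ).filter_mono nhdsWithin_le_nhds] with y h1 h2 h3
  rw [Real.dist_eq, abs_sub_lt_iff]
  exact ⟨by linarith [hδ' y h2 h3], by linarith⟩

/- The fiber polytope of a lattice polygon `N ⊂ ℝ²` over its projection segment
`[a,b]` (projection to the second coordinate): the set of values `2·∫_a^b s(x) dx`
over all continuous sections `s` of the projection.  It is a segment whose (lattice)
length equals the lattice area of `N`, i.e. twice the Euclidean area. -/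
theorem stmt12 (N V : Set (ℝ × ℝ)) (hV : V.Finite) (hVne : V.Nonempty)
    (hlat : ∀ p ∈ V, (∃ m : ℤ, p.1 = (m : ℝ)) ∧ (∃ m : ℤ, p.2 = (m : ℝ)))
    (hN : N = convexHull ℝ V) (a b : ℝ) (hab : a ≤ b)
    (hproj : (fun p : ℝ × ℝ => p.2) '' N = Set.Icc a b) :
    ∃ c d : ℝ, c ≤ d ∧
      {y : ℝ | ∃ s : ℝ → ℝ, ContinuousOn s (Set.Icc a b) ∧
        (∀ x ∈ Set.Icc a b, ((s x, x) : ℝ × ℝ) ∈ N) ∧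
        y = 2 * ∫ x in a..b, s x} = Set.Icc c d ∧
      d - c = 2 * (volume N).toReal := by
  classical
  have hNcomp : IsCompact N := hN ▸ hV.isCompact_convexHull ℝ
  have hNconv : Convex ℝ N := hN ▸ convex_convexHull ℝ V
  have hNclosed : IsClosed N := hNcomp.isClosed
  set S : ℝ → Set ℝ := fun x => {t | (t, x) ∈ N} with hSdef
  have hcomb : ∀ (t₁ t₂ x y p q : ℝ),
      p • ((t₁, x) : ℝ × ℝ) + q • ((t₂, y) : ℝ × ℝ) = (p * t₁ + q * t₂, p * x + q * y) :=
    fun _ _ _ _ _ _ => rfl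
  have hSconv : ∀ x, Convex ℝ (S x) := by
    intro x t₁ h₁ t₂ h₂ p q hp hq hpq
    have h3 := hNconv h₁ h₂ hp hq hpq
    rw [hcomb, show p * x + q * x = x from by rw [← add_mul, hpq, one_mul]] at h3
    simpa [hSdef, smul_eq_mul] using h3
  have hScl : ∀ x, IsClosed (S x) :=
    fun x => hNclosed.preimage (continuous_id.prodMk continuous_const)
  have hScomp : ∀ x, IsCompact (S x) := by
    intro x
    exact (hNcomp.image continuous_fst).of_isClosed_subset (hScl x)
      (fun t ht => ⟨(t, x), ht, rfl⟩)
  have hSne : ∀ x ∈ Set.Icc a b, (S x).Nonempty := by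
    intro x hx
    rw [← hproj] at hx
    obtain ⟨p, hp, hpx⟩ := hx
    refine ⟨p.1, ?_⟩
    show (p.1, x) ∈ N
    rw [show ((p.1, x) : ℝ × ℝ) = p from by rw [← hpx]]
    exact hp
  set f : ℝ → ℝ := fun x => sInf (S x) with hfdef
  set g : ℝ → ℝ := fun x => sSup (S x) with hgdef
  have hfmem : ∀ x ∈ Set.Icc a b, f x ∈ S x := fun x hx => (hScomp x).sInf_mem (hSne x hx)
  have hgmem : ∀ x ∈ Set.Icc a b, g x ∈ S x := fun x hx => (hScomp x).sSup_mem (hSne x hx)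
  have hfg : ∀ x ∈ Set.Icc a b, f x ≤ g x :=
    fun x hx => le_csSup (hScomp x).bddAbove (hfmem x hx)
  have hSeq : ∀ x ∈ Set.Icc a b, S x = Set.Icc (f x) (g x) := by
    intro x hx
    apply Set.Subset.antisymm
    · intro t ht
      exact ⟨csInf_le (hScomp x).bddBelow ht, le_csSup (hScomp x).bddAbove ht⟩
    · exact (hSconv x).ordConnected.out (hfmem x hx) (hgmem x hx)
  have hfcvx : ConvexOn ℝ (Set.Icc a b) f := by
    refine ⟨convex_Icc a b, ?_⟩
    intro x hx y hy p q hp hq hpq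
    have h3 := hNconv (hfmem x hx) (hfmem y hy) hp hq hpq
    rw [hcomb] at h3
    simp only [smul_eq_mul]
    exact csInf_le (hScomp _).bddBelow h3
  have hgccv : ConcaveOn ℝ (Set.Icc a b) g := by
    refine ⟨convex_Icc a b, ?_⟩
    intro x hx y hy p q hp hq hpq
    have h3 := hNconv (hgmem x hx) (hgmem y hy) hp hq hpq
    rw [hcomb] at h3
    simp only [smul_eq_mul]
    exact le_csSup (hScomp _).bddAbove h3
  have hflsc : ∀ x ∈ Set.Icc a b, ∀ ε > 0, ∀ᶠ y in 𝓝[Set.Icc a b] x, f x - ε < f y := by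
    intro x hx ε hε
    set K := Prod.snd '' (N ∩ {p : ℝ × ℝ | p.1 ≤ f x - ε}) with hK
    have hKcl : IsClosed K :=
      ((hNcomp.inter_right (isClosed_le continuous_fst continuous_const)).image
        continuous_snd).isClosed
    have hxK : x ∉ K := by
      rintro ⟨p, ⟨hpN, hpc⟩, hpx⟩
      have hp1 : p.1 ∈ S x := by
        show (p.1, x) ∈ N
        rw [show ((p.1, x) : ℝ × ℝ) = p from by rw [← hpx]]
        exact hpN
      have := csInf_le (hScomp x).bddBelow hp1
      simp only [Set.mem_setOf_eq] at hpc
      linarith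
    have hopen : Kᶜ ∈ 𝓝 x := hKcl.isOpen_compl.mem_nhds hxK
    have hev : ∀ᶠ y in 𝓝[Set.Icc a b] x, y ∈ Kᶜ :=
      Filter.eventually_of_mem (mem_nhdsWithin_of_mem_nhds hopen) (fun y hy => hy)
    filter_upwards [hev, eventually_mem_nhdsWithin] with y hyK hyI
    by_contra hcon
    push_neg at hcon
    exact hyK ⟨(f y, y), ⟨hfmem y hyI, hcon⟩, rfl⟩
  have hgusc : ∀ x ∈ Set.Icc a b, ∀ ε > 0, ∀ᶠ y in 𝓝[Set.Icc a b] x, g y < g x + ε := by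
    intro x hx ε hε
    set K := Prod.snd '' (N ∩ {p : ℝ × ℝ | g x + ε ≤ p.1}) with hK
    have hKcl : IsClosed K :=
      ((hNcomp.inter_right (isClosed_le continuous_const continuous_fst)).image
        continuous_snd).isClosed
    have hxK : x ∉ K := by
      rintro ⟨p, ⟨hpN, hpc⟩, hpx⟩
      have hp1 : p.1 ∈ S x := by
        show (p.1, x) ∈ N
        rw [show ((p.1, x) : ℝ × ℝ) = p from by rw [← hpx]]
        exact hpN
      have := le_csSup (hScomp x).bddAbove hp1
      simp only [Set.mem_setOf_eq] at hpc
      linarith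
    have hopen : Kᶜ ∈ 𝓝 x := hKcl.isOpen_compl.mem_nhds hxK
    have hev : ∀ᶠ y in 𝓝[Set.Icc a b] x, y ∈ Kᶜ :=
      Filter.eventually_of_mem (mem_nhdsWithin_of_mem_nhds hopen) (fun y hy => hy)
    filter_upwards [hev, eventually_mem_nhdsWithin] with y hyK hyI
    by_contra hcon
    push_neg at hcon
    exact hyK ⟨(g y, y), ⟨hgmem y hyI, hcon⟩, rfl⟩
  have hfcont : ContinuousOn f (Set.Icc a b) := aux_convex_cont hab hfcvx hflsc
  have hgcont : ContinuousOn g (Set.Icc a b) := by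
    have h1 : ContinuousOn (-g) (Set.Icc a b) := by
      apply aux_convex_cont hab hgccv.neg
      intro x hx ε hε
      filter_upwards [hgusc x hx ε hε] with y hy
      simp only [Pi.neg_apply]
      linarith
    simpa using h1.neg
  have hfint : IntervalIntegrable f volume a b := ContinuousOn.intervalIntegrable_of_Icc (μ := volume) hab hfcont
  have hgint : IntervalIntegrable g volume a b := ContinuousOn.intervalIntegrable_of_Icc (μ := volume) hab hgcont
  have hIle : ∫ x in a..b, f x ≤ ∫ x in a..b, g x :=
    intervalIntegral.integral_mono_on hab hfint hgint hfg
  refine ⟨2 * ∫ x in a..b, f x, 2 * ∫ x in a..b, g x, by linarith, ?_, ?_⟩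
  · ext y
    simp only [Set.mem_setOf_eq, Set.mem_Icc]
    constructor
    · rintro ⟨s, hscont, hsec, rfl⟩
      have hsint := ContinuousOn.intervalIntegrable_of_Icc (μ := volume) hab hscont
      have hb : ∀ x ∈ Set.Icc a b, f x ≤ s x ∧ s x ≤ g x := by
        intro x hx
        have hmem : s x ∈ S x := hsec x hx
        rw [hSeq x hx] at hmem
        exact hmem
      constructor
      · have := intervalIntegral.integral_mono_on hab hfint hsint (fun x hx => (hb x hx).1)
        linarith
      · have := intervalIntegral.integral_mono_on hab hsint hgint (fun x hx => (hb x hx).2)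
        linarith
    · rintro ⟨hy1, hy2⟩
      by_cases hcd : 2 * ∫ x in a..b, f x = 2 * ∫ x in a..b, g x
      · exact ⟨f, hfcont, fun x hx => hfmem x hx,
          le_antisymm (by rw [hcd]; exact hy2) hy1⟩
      · have hlt : (∫ x in a..b, f x) < ∫ x in a..b, g x :=
          lt_of_le_of_ne hIle (fun h => hcd (by rw [h]))
        set If := ∫ x in a..b, f x with hIf
        set Ig := ∫ x in a..b, g x with hIg
        set t := (2 * Ig - y) / (2 * Ig - 2 * If) with htdef
        have hden : (0:ℝ) < 2 * Ig - 2 * If := by linarith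
        have ht0 : 0 ≤ t := div_nonneg (by linarith) hden.le
        have ht1 : t ≤ 1 := by rw [htdef, div_le_one hden]; linarith
        refine ⟨fun x => t * f x + (1 - t) * g x,
          (continuousOn_const.mul hfcont).add (continuousOn_const.mul hgcont), ?_, ?_⟩
        · intro x hx
          have hmem : t * f x + (1 - t) * g x ∈ S x := by
            rw [hSeq x hx]
            constructor
            · nlinarith [hfg x hx]
            · nlinarith [hfg x hx]
          exact hmem
        · have hsum : ∫ x in a..b, (t * f x + (1 - t) * g x) = t * If + (1 - t) * Ig := by
            rw [intervalIntegral.integral_add (hfint.const_mul t) (hgint.const_mul (1 - t)),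
              intervalIntegral.integral_const_mul, intervalIntegral.integral_const_mul]
          rw [hsum]
          have hkey : t * (2 * Ig - 2 * If) = 2 * Ig - y := by
            rw [htdef]; exact div_mul_cancel₀ _ hden.ne'
          linear_combination hkey
  · have hNmeas : MeasurableSet N := hNclosed.measurableSet
    have hsecvol : ∀ y : ℝ, volume ((fun x => (x, y)) ⁻¹' N)
        = Set.indicator (Set.Icc a b) (fun y => ENNReal.ofReal (g y - f y)) y := by
      intro y
      by_cases hy : y ∈ Set.Icc a b
      · rw [Set.indicator_of_mem hy]
        have hpre : (fun x => (x, y)) ⁻¹' N = Set.Icc (f y) (g y) := by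
          rw [← hSeq y hy]; rfl
        rw [hpre, Real.volume_Icc]
      · rw [Set.indicator_of_notMem hy]
        have hpre : (fun x => (x, y)) ⁻¹' N = ∅ := by
          ext u
          simp only [Set.mem_preimage, Set.mem_empty_iff_false, iff_false]
          intro hu
          exact hy (by rw [← hproj]; exact ⟨(u, y), hu, rfl⟩)
        rw [hpre, measure_empty]
    have hvol : volume N = ∫⁻ y in Set.Icc a b, ENNReal.ofReal (g y - f y) := by
      rw [MeasureTheory.Measure.volume_eq_prod, MeasureTheory.Measure.prod_apply_symm hNmeas]
      rw [lintegral_congr hsecvol, MeasureTheory.lintegral_indicator measurableSet_Icc]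
    have hgfint : IntegrableOn (fun y => g y - f y) (Set.Icc a b) volume :=
      (hgcont.sub hfcont).integrableOn_Icc
    have hlr : ∫ y in Set.Icc a b, (g y - f y)
        = (∫⁻ y in Set.Icc a b, ENNReal.ofReal (g y - f y)).toReal := by
      rw [MeasureTheory.integral_eq_lintegral_of_nonneg_ae]
      · exact (ae_restrict_iff' measurableSet_Icc).2
          (Filter.Eventually.of_forall (fun y hy => sub_nonneg.2 (hfg y hy)))
      · exact hgfint.aestronglyMeasurable
    have hiic : ∫ y in Set.Icc a b, (g y - f y) = ∫ x in a..b, (g x - f x) := by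
      rw [intervalIntegral.integral_of_le hab, MeasureTheory.integral_Icc_eq_integral_Ioc]
    have hsub : ∫ x in a..b, (g x - f x) = (∫ x in a..b, g x) - ∫ x in a..b, f x :=
      intervalIntegral.integral_sub hgint hfint
    rw [hvol, ← hlr, hiic, hsub]
    ring
end
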